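/- arXiv:2106.11732 — 2 statements merged into one kernel-verified Lean document; each statement's English description precedes it below -/
import Mathlib

section
/- Under the setting of the filtering lemma (K > N/2 clean sources with pairwise D-scores ≤ 2Δ among clean sources, q_i the K-th smallest entry of row i, and I the set of indices i whose q_i is among the K smallest of q_1,…,q_N), every i ∈ I satisfies: there exists j ∈ G with D(i,j) ≤ 2Δ. -/
open Finset

/-- `q` is the `K`-th smallest value of the finite family `v`: at least `K` entries of `v`
are `≤ q` and at most `K−1` entries are `< q`. -/
def IsKthSmallest {N : ℕ} (v : Fin N → ℝ) (K : ℕ) (q : ℝ) : Prop :=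
  K ≤ (Finset.univ.filter fun j => v j ≤ q).card ∧
    (Finset.univ.filter fun j => v j < q).card ≤ K - 1

/-- FLEA filtering: every selected source (one whose row quantile `q i` is among the `K`
smallest of `q_1, …, q_N`) has a `D`-score of at most `2Δ` to some clean source `j ∈ G`. -/
theorem selected_close_to_clean {N K : ℕ} (hK : N < 2 * K) (hKN : K ≤ N)
    (G : Finset (Fin N)) (hG : G.card = K)
    (D : Fin N → Fin N → ℝ) (hpos : ∀ i j, 0 ≤ D i j)
    (hsymm : ∀ i j, D i j = D j i) (hdiag : ∀ i, D i i = 0)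
    (Δ : ℝ) (hclean : ∀ i ∈ G, ∀ j ∈ G, D i j ≤ 2 * Δ)
    (q : Fin N → ℝ) (hq : ∀ i, IsKthSmallest (fun j => D i j) K (q i))
    (Q : ℝ) (hQ : IsKthSmallest q K Q)
    (I : Finset (Fin N)) (hI : I = Finset.univ.filter fun i => q i ≤ Q) :
    ∀ i ∈ I, ∃ j ∈ G, D i j ≤ 2 * Δ := by
  intro i hi
  have hK1 : 1 ≤ K := by omega
  subst hI
  have hiQ : q i ≤ Q := (Finset.mem_filter.mp hi).2
  -- generic: K-th smallest bound
  have key : ∀ (v : Fin N → ℝ) (c : ℝ) (x : ℝ), IsKthSmallest v K x →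
      (∀ g ∈ G, v g ≤ c) → x ≤ c := by
    intro v c x hx hv
    obtain ⟨-, h2⟩ := hx
    by_contra h
    push_neg at h
    have hsub : G ⊆ Finset.univ.filter fun j => v j < x := by
      intro g hg
      exact Finset.mem_filter.mpr ⟨Finset.mem_univ g, lt_of_le_of_lt (hv g hg) h⟩
    have := Finset.card_le_card hsub
    omega
  -- q g ≤ 2Δ for clean g
  have hqG : ∀ g ∈ G, q g ≤ 2 * Δ := fun g hg =>
    key (fun j => D g j) (2 * Δ) (q g) (hq g) (fun j hj => hclean g hg j hj)
  have hQ2 : Q ≤ 2 * Δ := key q (2 * Δ) Q hQ hqG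
  -- intersection
  set A := Finset.univ.filter fun j => D i j ≤ q i with hA
  have hAcard : K ≤ A.card := (hq i).1
  have hninter : (A ∩ G).Nonempty := by
    rw [← Finset.card_pos]
    have h1 : (A ∪ G).card ≤ N := by
      simpa using Finset.card_le_card (Finset.subset_univ (A ∪ G))
    have h2 : (A ∪ G).card + (A ∩ G).card = A.card + G.card :=
      Finset.card_union_add_card_inter A G
    omega
  obtain ⟨j, hj⟩ := hninter
  have hjA := Finset.mem_inter.mp hj
  refine ⟨j, hjA.2, ?_⟩
  have : D i j ≤ q i := (Finset.mem_filter.mp hjA.1).2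
  linarith
end

section
/- Let τ ∈ (0, 1/2], Δ > 0 with 3Δ < τ, and for each j ∈ I let c_j ∈ ℕ satisfy |c_j − nτ| ≤ 3nΔ, and let v_j, w_j be reals with 0 ≤ v_j ≤ c_j and 0 ≤ w_j ≤ n − c_j. Then Σ_{j∈I} v_j / Σ_{j∈I} c_j − Σ_{j∈I} w_j / Σ_{j∈I}(n − c_j) ≤ (1/|I|) Σ_{j∈I} (v_j/c_j − w_j/(n−c_j)) + 6Δ/(τ − 3Δ) + 6Δ/(1 − τ + 3Δ). -/
/-!
With `r j = u j / d j ∈ [0, 1]`, the pooled ratio `∑ u / ∑ d` is the `d`-weighted mean of the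
`r j`. If all weights lie in `[a, b]`, then `∑ u ≤ b ∑ r` and `∑ d ≥ |s| a` (resp. `∑ u ≥ a ∑ r`
and `∑ d ≤ |s| b`), and since `∑ r ≤ |s|` the weighted mean exceeds the plain mean by at most
`(b - a) / a` and falls short of it by at most `(b - a) / b`. The disbalance bound puts `c j` in
`[n (τ - 3Δ), n (τ + 3Δ)]` and `n - c j` in `[n (1 - τ - 3Δ), n (1 - τ + 3Δ)]`; applying the first
estimate to the `v`-ratios and the second to the `w`-ratios gives the two error terms.
-/

open Finset

section PooledRatio

variable {ι : Type*} {s : Finset ι} {a b : ℝ} {d u : ι → ℝ}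

lemma sum_div_le_card (hd : ∀ j ∈ s, 0 < d j) (hud : ∀ j ∈ s, u j ≤ d j) :
    ∑ j ∈ s, u j / d j ≤ #s := by
  simpa using sum_le_card_nsmul s _ 1 fun j hj => (div_le_one (hd j hj)).mpr (hud j hj)

lemma sum_le_mul_sum_div (hd : ∀ j ∈ s, 0 < d j) (hdb : ∀ j ∈ s, d j ≤ b)
    (hu : ∀ j ∈ s, 0 ≤ u j) : ∑ j ∈ s, u j ≤ b * ∑ j ∈ s, u j / d j := by
  rw [mul_sum]
  refine sum_le_sum fun j hj => ?_
  rw [mul_div_left_comm]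
  exact le_mul_of_one_le_right (hu j hj) ((one_le_div (hd j hj)).mpr (hdb j hj))

lemma mul_sum_div_le_sum (hd : ∀ j ∈ s, 0 < d j) (had : ∀ j ∈ s, a ≤ d j)
    (hu : ∀ j ∈ s, 0 ≤ u j) : a * ∑ j ∈ s, u j / d j ≤ ∑ j ∈ s, u j := by
  rw [mul_sum]
  refine sum_le_sum fun j hj => ?_
  rw [mul_div_left_comm]
  exact mul_le_of_le_one_right (hu j hj) ((div_le_one (hd j hj)).mpr (had j hj))

theorem sum_div_sum_le_average_add (hs : s.Nonempty) (ha : 0 < a)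
    (had : ∀ j ∈ s, a ≤ d j) (hdb : ∀ j ∈ s, d j ≤ b)
    (hu0 : ∀ j ∈ s, 0 ≤ u j) (hud : ∀ j ∈ s, u j ≤ d j) :
    (∑ j ∈ s, u j) / ∑ j ∈ s, d j ≤ (∑ j ∈ s, u j / d j) / #s + (b - a) / a := by
  obtain ⟨j₀, hj₀⟩ := hs
  have hd : ∀ j ∈ s, 0 < d j := fun j hj => ha.trans_le (had j hj)
  have hm : (0 : ℝ) < #s := by exact_mod_cast card_pos.2 ⟨j₀, hj₀⟩
  have hab : 0 ≤ (b - a) / a := div_nonneg (by linarith [had j₀ hj₀, hdb j₀ hj₀]) ha.le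
  set S := ∑ j ∈ s, u j / d j
  have hS : S / #s ≤ 1 := (div_le_one hm).mpr (sum_div_le_card hd hud)
  have hD : #s * a ≤ ∑ j ∈ s, d j := by simpa using card_nsmul_le_sum s d a had
  calc (∑ j ∈ s, u j) / ∑ j ∈ s, d j
      ≤ (∑ j ∈ s, u j) / (#s * a) :=
        div_le_div_of_nonneg_left (sum_nonneg hu0) (by positivity) hD
    _ ≤ b * S / (#s * a) := by gcongr; exact sum_le_mul_sum_div hd hdb hu0
    _ = S / #s + (b - a) / a * (S / #s) := by field_simp; ring
    _ ≤ S / #s + (b - a) / a := by gcongr; exact mul_le_of_le_one_right hab hS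

theorem average_le_sum_div_sum_add (hs : s.Nonempty) (ha : 0 < a)
    (had : ∀ j ∈ s, a ≤ d j) (hdb : ∀ j ∈ s, d j ≤ b)
    (hu0 : ∀ j ∈ s, 0 ≤ u j) (hud : ∀ j ∈ s, u j ≤ d j) :
    (∑ j ∈ s, u j / d j) / #s ≤ (∑ j ∈ s, u j) / ∑ j ∈ s, d j + (b - a) / b := by
  obtain ⟨j₀, hj₀⟩ := hs
  have hd : ∀ j ∈ s, 0 < d j := fun j hj => ha.trans_le (had j hj)
  have hm : (0 : ℝ) < #s := by exact_mod_cast card_pos.2 ⟨j₀, hj₀⟩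
  have hb : 0 < b := (hd j₀ hj₀).trans_le (hdb j₀ hj₀)
  have hab : 0 ≤ (b - a) / b := div_nonneg (by linarith [had j₀ hj₀, hdb j₀ hj₀]) hb.le
  set S := ∑ j ∈ s, u j / d j
  have hS : S / #s ≤ 1 := (div_le_one hm).mpr (sum_div_le_card hd hud)
  have hD : ∑ j ∈ s, d j ≤ #s * b := by simpa using sum_le_card_nsmul s d b hdb
  calc S / #s
      = a * S / (#s * b) + (b - a) / b * (S / #s) := by field_simp; ring
    _ ≤ (∑ j ∈ s, u j) / (#s * b) + (b - a) / b := by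
        gcongr
        · exact mul_sum_div_le_sum hd had hu0
        · exact mul_le_of_le_one_right hab hS
    _ ≤ (∑ j ∈ s, u j) / ∑ j ∈ s, d j + (b - a) / b := by
        gcongr
        · exact sum_nonneg hu0
        · exact sum_pos hd ⟨j₀, hj₀⟩

end PooledRatio

theorem pooled_ratio_bound_general {ι : Type*} [Fintype ι] [Nonempty ι] (n : ℕ) (hn : 1 ≤ n)
    (τ Δ : ℝ) (hτ1 : τ ≤ 1 / 2) (h3Δ : 3 * Δ < τ)
    (c : ι → ℕ)
    (hcτ : ∀ j, |(c j : ℝ) - n * τ| ≤ 3 * n * Δ)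
    (v w : ι → ℝ)
    (hv0 : ∀ j, 0 ≤ v j) (hv1 : ∀ j, v j ≤ (c j : ℝ))
    (hw0 : ∀ j, 0 ≤ w j) (hw1 : ∀ j, w j ≤ (n : ℝ) - (c j : ℝ)) :
    (∑ j, v j) / (∑ j, (c j : ℝ)) - (∑ j, w j) / (∑ j, ((n : ℝ) - (c j : ℝ))) ≤
      (1 / (Fintype.card ι : ℝ)) * (∑ j, (v j / (c j : ℝ) - w j / ((n : ℝ) - (c j : ℝ))))
        + 6 * Δ / (τ - 3 * Δ) + 6 * Δ / (1 - τ + 3 * Δ) := by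
  have hn0 : (0 : ℝ) < n := by exact_mod_cast hn
  have hc j : n * (τ - 3 * Δ) ≤ c j ∧ (c j : ℝ) ≤ n * (τ + 3 * Δ) := by
    constructor <;> linarith [abs_le.mp (hcτ j)]
  have hv_pooled := sum_div_sum_le_average_add univ_nonempty (mul_pos hn0 (by linarith))
    (fun j _ => (hc j).1) (fun j _ => (hc j).2) (fun j _ => hv0 j) (fun j _ => hv1 j)
  have hw_pooled := average_le_sum_div_sum_add (d := fun j => (n : ℝ) - c j) univ_nonempty
    (a := n * (1 - τ - 3 * Δ)) (b := n * (1 - τ + 3 * Δ)) (mul_pos hn0 (by linarith))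
    (fun j _ => by linarith [(hc j).2]) (fun j _ => by linarith [(hc j).1])
    (fun j _ => hw0 j) (fun j _ => hw1 j)
  have hv_err : (n * (τ + 3 * Δ) - n * (τ - 3 * Δ)) / (n * (τ - 3 * Δ))
      = 6 * Δ / (τ - 3 * Δ) := by
    rw [← mul_sub, mul_div_mul_left _ _ hn0.ne']; ring_nf
  have hw_err : (n * (1 - τ + 3 * Δ) - n * (1 - τ - 3 * Δ)) / (n * (1 - τ + 3 * Δ))
      = 6 * Δ / (1 - τ + 3 * Δ) := by
    rw [← mul_sub, mul_div_mul_left _ _ hn0.ne']; ring_nf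
  rw [card_univ] at hv_pooled hw_pooled
  rw [one_div_mul_eq_div, sum_sub_distrib (fun j => v j / (c j : ℝ)), sub_div]
  linarith

/-- Pooled-ratio lemma (Step 3 of the proof of Theorem 1): the pooled
demographic-parity-type ratio over merged sources is bounded by the average of the
per-source ratios plus an error term controlled by the disbalance bound. -/
theorem pooled_ratio_bound {ι : Type*} [Fintype ι] [Nonempty ι] (n : ℕ) (hn : 1 ≤ n)
    (τ Δ : ℝ) (hτ0 : 0 < τ) (hτ1 : τ ≤ 1 / 2) (hΔ : 0 < Δ) (h3Δ : 3 * Δ < τ)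
    (c : ι → ℕ) (hc0 : ∀ j, 0 < c j) (hcn : ∀ j, c j < n)
    (hcτ : ∀ j, |(c j : ℝ) - n * τ| ≤ 3 * n * Δ)
    (v w : ι → ℝ)
    (hv0 : ∀ j, 0 ≤ v j) (hv1 : ∀ j, v j ≤ (c j : ℝ))
    (hw0 : ∀ j, 0 ≤ w j) (hw1 : ∀ j, w j ≤ (n : ℝ) - (c j : ℝ)) :
    (∑ j, v j) / (∑ j, (c j : ℝ)) - (∑ j, w j) / (∑ j, ((n : ℝ) - (c j : ℝ))) ≤
      (1 / (Fintype.card ι : ℝ)) * (∑ j, (v j / (c j : ℝ) - w j / ((n : ℝ) - (c j : ℝ))))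
        + 6 * Δ / (τ - 3 * Δ) + 6 * Δ / (1 - τ + 3 * Δ) :=
  pooled_ratio_bound_general n hn τ Δ hτ1 h3Δ c hcτ v w hv0 hv1 hw0 hw1
end
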